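/- Suppose additionally that H is Hermitian and Λ > 0, and set t_∞ = log 2 / Λ, s = s_{\vec{L}}(t_∞), and ε = 2 − s. Assume ε ≤ 1/2, and define Ã = (3/s) U_{\vec{L}}(t_∞) − (4/s³) U_{\vec{L}}(t_∞) U_{\vec{L}}(t_∞)* U_{\vec{L}}(t_∞). Then for every number of steps r ∈ ℕ, ‖exp(−i r t_∞ H) − Ã^r‖ ≤ r (ε + 8ε²) (1 + ε + 8ε²)^{r−1}. -/

import Mathlib

open Matrix
open scoped Matrix.Norms.L2Operator

/-- The partially truncated Hamiltonian `Σ_{ℓ=0}^{m-1} α_ℓ h_ℓ` (for `m = L` this is the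
full Hamiltonian `H`). -/
noncomputable def Hpart (d : ℕ) (h : ℕ → Matrix (Fin d) (Fin d) ℂ) (α : ℕ → ℝ) (m : ℕ) :
    Matrix (Fin d) (Fin d) ℂ :=
  ∑ ℓ ∈ Finset.range m, (α ℓ : ℂ) • h ℓ

/-- The generalized (term-truncated) Taylor operator `U_{\vec L}(t)`. -/
noncomputable def Utrunc (d : ℕ) (h : ℕ → Matrix (Fin d) (Fin d) ℂ) (α : ℕ → ℝ)
    (Lk : ℕ → ℕ) (t : ℝ) : Matrix (Fin d) (Fin d) ℂ :=
  1 + ∑' k : ℕ, ((-(t : ℂ) * Complex.I) ^ (k + 1) / (Nat.factorial (k + 1) : ℂ)) •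
      ((List.range (k + 1)).map (fun j => Hpart d h α (Lk (j + 1)))).prod

/-- The scalar normalization series `s_{\vec L}(t) = Σ_{k=0}^∞ (t^k/k!) ∏_{j=1}^k Λ_j`. -/
noncomputable def strunc (α : ℕ → ℝ) (Lk : ℕ → ℕ) (t : ℝ) : ℝ :=
  ∑' k : ℕ, t ^ k / (Nat.factorial k : ℝ) *
      ∏ j ∈ Finset.range k, (∑ ℓ ∈ Finset.range (Lk (j + 1)), α ℓ)

/-- The effective operator of one amplified step,
`Ã = (3/s) U_{\vec L}(t_∞) − (4/s³) U_{\vec L}(t_∞) U_{\vec L}(t_∞)* U_{\vec L}(t_∞)`,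
where `t_∞ = log 2 / Λ` and `s = s_{\vec L}(t_∞)`. -/
noncomputable def Atilde (d : ℕ) (h : ℕ → Matrix (Fin d) (Fin d) ℂ) (α : ℕ → ℝ)
    (Lk : ℕ → ℕ) (tinf s : ℝ) : Matrix (Fin d) (Fin d) ℂ :=
  ((3 / s : ℝ) : ℂ) • Utrunc d h α Lk tinf -
    ((4 / s ^ 3 : ℝ) : ℂ) • (Utrunc d h α Lk tinf * (Utrunc d h α Lk tinf)ᴴ *
      Utrunc d h α Lk tinf)

/-!
Put `t = log 2 / Λ` and `V = exp(-i t H)`. Unitarity of the `h_ℓ` gives `‖H_m‖ ≤ Λ_m` and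
`‖H - H_m‖ ≤ Λ - Λ_m` for the partial sums `H_m`, so telescoping majorizes `H^k - ∏_j H_{L_j}` by
`Λ^k - ∏_j Λ_j`. Comparing the Taylor series of `V` and `U = U_{\vec L}(t)` term by term then
gives `‖V - U‖ ≤ e^{tΛ} - s = ε`.

With `W = U/s ≈ V/2`, the operator `Ã = 3W - 4WW*W` is one round of oblivious amplitude
amplification: `sin 3θ = 3 sin θ - 4 sin³ θ` sends `sin θ = 1/2` to `1`, and the derivative of
`3x - 4x³` vanishes at `1/2`, so the error of `s` enters the scalar part only quadratically.
Writing `U = V (1 + F)` with `‖F‖ ≤ ε` and expanding yields `‖Ã - V‖ ≤ ε + 8ε²`. The `r`-step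
bound follows by telescoping `V^r - Ã^r`, using `‖V‖ = 1` and `‖Ã‖ ≤ 1 + ε + 8ε²`.
-/

open NormedSpace

section CStarAlgebra

variable {A : Type*} [CStarAlgebra A]

theorem norm_sum_smul_le_of_mem_unitary [Nontrivial A] {ι : Type*} (s : Finset ι) {c : ι → ℝ}
    {u : ι → A} (hc : ∀ i ∈ s, 0 ≤ c i) (hu : ∀ i ∈ s, u i ∈ unitary A) :
    ‖∑ i ∈ s, (c i : ℂ) • u i‖ ≤ ∑ i ∈ s, c i := by
  refine (norm_sum_le _ _).trans (Finset.sum_le_sum fun i hi => ?_)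
  rw [norm_smul, CStarRing.norm_of_mem_unitary (hu i hi), mul_one, Complex.norm_real,
    Real.norm_of_nonneg (hc i hi)]

theorem exp_neg_mul_I_smul_mem_unitary {H : A} (hH : IsSelfAdjoint H) (t : ℝ) :
    exp ((-(t : ℂ) * Complex.I) • H) ∈ unitary A :=
  letI : NormedAlgebra ℚ A := .restrictScalars ℚ ℂ A
  exp_mem_unitary_of_mem_skewAdjoint (hH.smul_mem_skewAdjoint (by simp [skewAdjoint.mem_iff]))

/-- `3W - 4WW*W` for `W = U/s`. -/
noncomputable def amplify (s : ℝ) (U : A) : A :=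
  ((3 / s : ℝ) : ℂ) • U - ((4 / s ^ 3 : ℝ) : ℂ) • (U * star U * U)

theorem amplify_unitary_mul {V : A} (hV : V ∈ unitary A) (s : ℝ) (T : A) :
    amplify s (V * T) = V * amplify s T := by
  have hVV : star V * V = 1 := Unitary.star_mul_self_of_mem hV
  simp only [amplify, star_mul, mul_sub, mul_smul_comm, mul_assoc]
  rw [← mul_assoc (star V) V, hVV, one_mul]

theorem amplify_one_add_sub_one (s : ℝ) (F : A) :
    amplify s (1 + F) - 1 =
      ((3 / s - 4 / s ^ 3 - 1 : ℝ) : ℂ) • 1 + ((3 / s - 8 / s ^ 3 : ℝ) : ℂ) • F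
        - ((4 / s ^ 3 : ℝ) : ℂ) •
          (star F + (F * F + F * star F + star F * F + F * star F * F)) := by
  have hcube : (1 + F) * star (1 + F) * (1 + F)
      = 1 + (F + F) + star F + (F * F + F * star F + star F * F + F * star F * F) := by
    rw [star_add, star_one]; noncomm_ring
  rw [amplify, hcube]
  push_cast
  module

theorem amplification_error_bound {e : ℝ} (he0 : 0 ≤ e) (he : e ≤ 1 / 2) :
    |3 / (2 - e) - 4 / (2 - e) ^ 3 - 1| + |3 / (2 - e) - 8 / (2 - e) ^ 3| * e
      + 4 / (2 - e) ^ 3 * (e + (3 * e ^ 2 + e ^ 3)) ≤ e + 8 * e ^ 2 := by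
  have hs : 0 < 2 - e := by linarith
  have hs3 : 0 < (2 - e) ^ 3 := by positivity
  have h1 : 3 / (2 - e) - 4 / (2 - e) ^ 3 - 1 = -(e ^ 2 * (3 - e)) / (2 - e) ^ 3 := by
    field_simp; ring
  have h2 : 3 / (2 - e) - 8 / (2 - e) ^ 3 = (3 * (2 - e) ^ 2 - 8) / (2 - e) ^ 3 := by
    field_simp
  rw [h1, h2, abs_div, abs_div, abs_of_pos hs3, abs_neg, abs_of_nonneg (by nlinarith),
    show ∀ x y z : ℝ, x / (2 - e) ^ 3 + y / (2 - e) ^ 3 * e + 4 / (2 - e) ^ 3 * z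
      = (x + y * e + 4 * z) / (2 - e) ^ 3 from fun x y z => by ring, div_le_iff₀ hs3]
  rcases abs_cases (3 * (2 - e) ^ 2 - 8) with ⟨habs, -⟩ | ⟨habs, -⟩ <;> rw [habs] <;>
    nlinarith [mul_nonneg he0 he0, mul_nonneg (mul_nonneg he0 he0) he0,
      mul_nonneg (mul_nonneg he0 he0) (mul_nonneg he0 he0), sq_nonneg (1 - 2 * e)]

theorem norm_amplify_one_add_sub_one_le [Nontrivial A] {F : A} {e : ℝ} (he0 : 0 ≤ e)
    (he : e ≤ 1 / 2) (hF : ‖F‖ ≤ e) : ‖amplify (2 - e) (1 + F) - 1‖ ≤ e + 8 * e ^ 2 := by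
  have hc : ∀ x : ℝ, ‖(x : ℂ)‖ = |x| := fun x => by rw [Complex.norm_real, Real.norm_eq_abs]
  have hF' : ‖star F‖ ≤ e := by rwa [norm_star]
  have hmul : ∀ {x y : A} {a b : ℝ}, ‖x‖ ≤ a → ‖y‖ ≤ b → ‖x * y‖ ≤ a * b := fun hx hy =>
    (norm_mul_le _ _).trans (mul_le_mul hx hy (norm_nonneg _) ((norm_nonneg _).trans hx))
  have hF2 : ‖F * F + F * star F + star F * F + F * star F * F‖ ≤ 3 * e ^ 2 + e ^ 3 := by
    refine (norm_add₄_le ..).trans ?_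
    linarith [hmul hF hF, hmul hF hF', hmul hF' hF, hmul (hmul hF hF') hF]
  rw [amplify_one_add_sub_one]
  calc _ ≤ |3 / (2 - e) - 4 / (2 - e) ^ 3 - 1| + |3 / (2 - e) - 8 / (2 - e) ^ 3| * e
        + 4 / (2 - e) ^ 3 * (e + (3 * e ^ 2 + e ^ 3)) := by
        refine (norm_sub_le _ _).trans (add_le_add ((norm_add_le _ _).trans ?_) ?_) <;>
          simp only [norm_smul, hc, CStarRing.norm_one, mul_one]
        · gcongr
        · rw [abs_of_nonneg (div_nonneg (by norm_num) (pow_nonneg (by linarith) 3))]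
          exact mul_le_mul_of_nonneg_left ((norm_add_le _ _).trans (add_le_add hF' hF2))
            (div_nonneg (by norm_num) (pow_nonneg (by linarith) 3))
    _ ≤ e + 8 * e ^ 2 := amplification_error_bound he0 he

theorem norm_amplify_sub_le_of_mem_unitary [Nontrivial A] {U V : A} (hV : V ∈ unitary A)
    {e : ℝ} (he0 : 0 ≤ e) (he : e ≤ 1 / 2) (hUV : ‖U - V‖ ≤ e) :
    ‖amplify (2 - e) U - V‖ ≤ e + 8 * e ^ 2 := by
  set F := star V * U - 1
  have hU : U = V * (1 + F) := by
    rw [add_sub_cancel, ← mul_assoc, Unitary.mul_star_self_of_mem hV, one_mul]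
  have hF : ‖F‖ = ‖U - V‖ := by
    rw [← CStarRing.norm_mem_unitary_mul (U - V) (Unitary.star_mem hV), mul_sub,
      Unitary.star_mul_self_of_mem hV]
  rw [hU, amplify_unitary_mul hV, ← mul_sub_one, CStarRing.norm_mem_unitary_mul _ hV]
  exact norm_amplify_one_add_sub_one_le he0 he (hF.trans_le hUV)

end CStarAlgebra

section NormedRing

variable {R : Type*} [NormedRing R] [NormOneClass R]

theorem norm_pow_sub_list_prod_le {X : R} {Y : ℕ → R} {a : ℝ} {b : ℕ → ℝ} (hX : ‖X‖ ≤ a)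
    (hY : ∀ j, ‖Y j‖ ≤ b j) (hXY : ∀ j, ‖X - Y j‖ ≤ a - b j) (k : ℕ) :
    ‖X ^ k - ((List.range k).map Y).prod‖ ≤ a ^ k - ∏ j ∈ Finset.range k, b j := by
  induction k with
  | zero => simp
  | succ k ih =>
    have hXk : ‖X ^ k‖ ≤ a ^ k :=
      (norm_pow_le X k).trans (pow_le_pow_left₀ (norm_nonneg X) hX k)
    rw [List.range_succ, List.map_append, List.prod_append, List.map_singleton,
      List.prod_singleton, Finset.prod_range_succ,
      show X ^ (k + 1) - ((List.range k).map Y).prod * Y k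
        = X ^ k * (X - Y k) + (X ^ k - ((List.range k).map Y).prod) * Y k by noncomm_ring]
    calc _ ≤ ‖X ^ k‖ * ‖X - Y k‖ + ‖X ^ k - ((List.range k).map Y).prod‖ * ‖Y k‖ :=
          (norm_add_le _ _).trans (add_le_add (norm_mul_le _ _) (norm_mul_le _ _))
      _ ≤ a ^ k * (a - b k) + (a ^ k - ∏ j ∈ Finset.range k, b j) * b k :=
          add_le_add (mul_le_mul hXk (hXY k) (norm_nonneg _) ((norm_nonneg _).trans hXk))
            (mul_le_mul ih (hY k) (norm_nonneg _) ((norm_nonneg _).trans ih))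
      _ = a ^ (k + 1) - (∏ j ∈ Finset.range k, b j) * b k := by ring

theorem norm_pow_sub_pow_le {V W : R} {δ : ℝ} (hV : ‖V‖ ≤ 1) (hVW : ‖V - W‖ ≤ δ) (n : ℕ) :
    ‖V ^ n - W ^ n‖ ≤ n * δ * (1 + δ) ^ (n - 1) := by
  have hδ : 0 ≤ δ := (norm_nonneg _).trans hVW
  have hW : ‖W‖ ≤ 1 + δ := by
    calc ‖W‖ ≤ ‖V‖ + ‖V - W‖ := by simpa using norm_sub_le V (V - W)
      _ ≤ 1 + δ := add_le_add hV hVW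
  induction n with
  | zero => simp
  | succ n ih =>
    have hWn : ‖W ^ n‖ ≤ (1 + δ) ^ n :=
      (norm_pow_le W n).trans (pow_le_pow_left₀ (norm_nonneg W) hW n)
    rw [show V ^ (n + 1) - W ^ (n + 1) = V * (V ^ n - W ^ n) + (V - W) * W ^ n by
      rw [pow_succ', pow_succ']; noncomm_ring]
    calc _ ≤ ‖V‖ * ‖V ^ n - W ^ n‖ + ‖V - W‖ * ‖W ^ n‖ :=
          (norm_add_le _ _).trans (add_le_add (norm_mul_le _ _) (norm_mul_le _ _))
      _ ≤ 1 * (n * δ * (1 + δ) ^ (n - 1)) + δ * (1 + δ) ^ n := by gcongr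
      _ ≤ n * δ * (1 + δ) ^ n + δ * (1 + δ) ^ n := by
          rw [one_mul]
          gcongr
          · linarith
          · exact Nat.sub_le n 1
      _ = (n + 1 : ℕ) * δ * (1 + δ) ^ (n + 1 - 1) := by push_cast; ring_nf

end NormedRing

theorem exp_smul_eq_tsum {A : Type*} [Ring A] [Algebra ℂ A] [TopologicalSpace A]
    [IsTopologicalRing A] (z : ℂ) (x : A) :
    exp (z • x) = ∑' k : ℕ, (z ^ k / k.factorial) • x ^ k := by
  rw [exp_eq_tsum ℂ]
  refine tsum_congr fun k => ?_
  rw [smul_pow, smul_smul, div_eq_inv_mul]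

section TruncatedTaylor

variable {d L : ℕ} {h : ℕ → Matrix (Fin d) (Fin d) ℂ} {α : ℕ → ℝ}

theorem norm_Hpart_sub_Hpart_le [NeZero d] (hunit : ∀ ℓ < L, h ℓ ∈ unitaryGroup (Fin d) ℂ)
    (hα : ∀ ℓ < L, 0 ≤ α ℓ) {m n : ℕ} (hmn : m ≤ n) (hn : n ≤ L) :
    ‖Hpart d h α n - Hpart d h α m‖ ≤ ∑ ℓ ∈ Finset.range n, α ℓ - ∑ ℓ ∈ Finset.range m, α ℓ := by
  have hsub := Finset.range_subset_range.mpr hmn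
  rw [Hpart, Hpart, ← Finset.sum_sdiff_eq_sub hsub, ← Finset.sum_sdiff_eq_sub hsub]
  have hlt : ∀ ℓ ∈ Finset.range n \ Finset.range m, ℓ < L := fun ℓ hℓ =>
    (Finset.mem_range.mp (Finset.sdiff_subset hℓ)).trans_le hn
  exact norm_sum_smul_le_of_mem_unitary _ (fun ℓ hℓ => hα ℓ (hlt ℓ hℓ))
    (fun ℓ hℓ => hunit ℓ (hlt ℓ hℓ))

theorem norm_Hpart_le [NeZero d] (hunit : ∀ ℓ < L, h ℓ ∈ unitaryGroup (Fin d) ℂ)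
    (hα : ∀ ℓ < L, 0 ≤ α ℓ) {m : ℕ} (hm : m ≤ L) :
    ‖Hpart d h α m‖ ≤ ∑ ℓ ∈ Finset.range m, α ℓ := by
  simpa [Hpart] using norm_Hpart_sub_Hpart_le hunit hα (Nat.zero_le m) hm

variable (d h α) in
noncomputable def Hprod (Lk : ℕ → ℕ) (k : ℕ) : Matrix (Fin d) (Fin d) ℂ :=
  ((List.range k).map fun j => Hpart d h α (Lk (j + 1))).prod

theorem norm_Hpart_pow_sub_Hprod_le [NeZero d] (hunit : ∀ ℓ < L, h ℓ ∈ unitaryGroup (Fin d) ℂ)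
    (hα : ∀ ℓ < L, 0 ≤ α ℓ) {Lk : ℕ → ℕ} (hLk : ∀ k, Lk k ≤ L) (k : ℕ) :
    ‖Hpart d h α L ^ k - Hprod d h α Lk k‖ ≤
      (∑ ℓ ∈ Finset.range L, α ℓ) ^ k -
        ∏ j ∈ Finset.range k, ∑ ℓ ∈ Finset.range (Lk (j + 1)), α ℓ :=
  norm_pow_sub_list_prod_le (norm_Hpart_le hunit hα le_rfl)
    (fun j => norm_Hpart_le hunit hα (hLk (j + 1)))
    (fun j => norm_Hpart_sub_Hpart_le hunit hα (hLk (j + 1)) le_rfl) k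

theorem Utrunc_eq_tsum {Lk : ℕ → ℕ} {t : ℝ}
    (hsum : Summable fun k : ℕ =>
      ((-(t : ℂ) * Complex.I) ^ k / k.factorial) • Hprod d h α Lk k) :
    Utrunc d h α Lk t =
      ∑' k : ℕ, ((-(t : ℂ) * Complex.I) ^ k / k.factorial) • Hprod d h α Lk k := by
  rw [hsum.tsum_eq_zero_add]
  simp [Utrunc, Hprod]

theorem norm_exp_sub_Utrunc_le [NeZero d] (hunit : ∀ ℓ < L, h ℓ ∈ unitaryGroup (Fin d) ℂ)
    (hα : ∀ ℓ < L, 0 ≤ α ℓ) {Lk : ℕ → ℕ} (hLk : ∀ k, Lk k ≤ L) {t : ℝ} (ht : 0 ≤ t) :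
    ‖exp ((-(t : ℂ) * Complex.I) • Hpart d h α L) - Utrunc d h α Lk t‖ ≤
      Real.exp (t * ∑ ℓ ∈ Finset.range L, α ℓ) - strunc α Lk t := by
  set Λ := ∑ ℓ ∈ Finset.range L, α ℓ
  set c : ℕ → ℂ := fun k => (-(t : ℂ) * Complex.I) ^ k / k.factorial
  set P : ℕ → ℝ := fun k => ∏ j ∈ Finset.range k, ∑ ℓ ∈ Finset.range (Lk (j + 1)), α ℓ
  set f := fun k => c k • Hpart d h α L ^ k
  set g := fun k => c k • Hprod d h α Lk k
  set a : ℕ → ℝ := fun k => t ^ k / k.factorial * P k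
  set b : ℕ → ℝ := fun k => (t * Λ) ^ k / k.factorial
  have hc : ∀ k, ‖c k‖ = t ^ k / k.factorial := fun k => by
    simp [c, abs_of_nonneg ht]
  have hb : HasSum b (Real.exp (t * Λ)) := Real.exp_eq_exp_ℝ ▸ expSeries_div_hasSum_exp (t * Λ)
  have hP : ∀ k, 0 ≤ P k := fun k => Finset.prod_nonneg fun j _ => Finset.sum_nonneg
    fun ℓ hℓ => hα ℓ ((Finset.mem_range.mp hℓ).trans_le (hLk (j + 1)))
  have hba : ∀ k, b k - a k = t ^ k / k.factorial * (Λ ^ k - P k) := fun k => by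
    simp only [a, b]; ring
  have hfg_le : ∀ k, ‖f k - g k‖ ≤ b k - a k := fun k => by
    rw [← smul_sub, norm_smul, hc, hba]
    exact mul_le_mul_of_nonneg_left (norm_Hpart_pow_sub_Hprod_le hunit hα hLk k) (by positivity)
  have ha : Summable a := hb.summable.of_nonneg_of_le (fun k => by positivity [hP k])
    (fun k => sub_nonneg.mp ((norm_nonneg _).trans (hfg_le k)))
  have hf_le : ∀ k, ‖f k‖ ≤ b k := fun k => by
    rw [norm_smul, hc, show b k = t ^ k / k.factorial * Λ ^ k by simp only [b]; ring]
    exact mul_le_mul_of_nonneg_left ((norm_pow_le _ k).trans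
      (pow_le_pow_left₀ (norm_nonneg _) (norm_Hpart_le hunit hα le_rfl) k)) (by positivity)
  have hf : Summable f := .of_norm_bounded hb.summable hf_le
  have hg : Summable g := by
    simpa using hf.sub (Summable.of_norm_bounded (hb.summable.sub ha) hfg_le)
  rw [exp_smul_eq_tsum, Utrunc_eq_tsum hg, ← hf.tsum_sub hg]
  exact tsum_of_norm_bounded (hb.sub ha.hasSum) hfg_le

end TruncatedTaylor

theorem total_simulation_error_general (d L : ℕ) (hd : 1 ≤ d)
    (h : ℕ → Matrix (Fin d) (Fin d) ℂ) (α : ℕ → ℝ)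
    (hunit : ∀ ℓ < L, h ℓ ∈ Matrix.unitaryGroup (Fin d) ℂ)
    (hα : ∀ ℓ < L, 0 ≤ α ℓ)
    (Lk : ℕ → ℕ) (hLk : ∀ k, Lk k ≤ L)
    (hH : (Hpart d h α L).IsHermitian)
    (hΛ : 0 < ∑ ℓ ∈ Finset.range L, α ℓ)
    (hε : 2 - strunc α Lk (Real.log 2 / ∑ ℓ ∈ Finset.range L, α ℓ) ≤ 1 / 2) :
    ∀ r : ℕ,
      ‖NormedSpace.exp
          ((-((r : ℝ) * (Real.log 2 / ∑ ℓ ∈ Finset.range L, α ℓ)) * Complex.I) •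
            Hpart d h α L) -
        (Atilde d h α Lk (Real.log 2 / ∑ ℓ ∈ Finset.range L, α ℓ)
            (strunc α Lk (Real.log 2 / ∑ ℓ ∈ Finset.range L, α ℓ))) ^ r‖ ≤
      (r : ℝ) *
        ((2 - strunc α Lk (Real.log 2 / ∑ ℓ ∈ Finset.range L, α ℓ)) +
          8 * (2 - strunc α Lk (Real.log 2 / ∑ ℓ ∈ Finset.range L, α ℓ)) ^ 2) *
        (1 + (2 - strunc α Lk (Real.log 2 / ∑ ℓ ∈ Finset.range L, α ℓ)) +
          8 * (2 - strunc α Lk (Real.log 2 / ∑ ℓ ∈ Finset.range L, α ℓ)) ^ 2) ^ (r - 1) := by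
  have : NeZero d := ⟨by omega⟩
  set Λ := ∑ ℓ ∈ Finset.range L, α ℓ
  set t := Real.log 2 / Λ
  set s := strunc α Lk t
  set V := exp ((-(t : ℂ) * Complex.I) • Hpart d h α L)
  have hV : V ∈ unitary _ := exp_neg_mul_I_smul_mem_unitary hH.isSelfAdjoint t
  have hUV : ‖Utrunc d h α Lk t - V‖ ≤ 2 - s := by
    have := norm_exp_sub_Utrunc_le hunit hα hLk (div_nonneg (Real.log_nonneg one_le_two) hΛ.le)
    rwa [div_mul_cancel₀ _ hΛ.ne', Real.exp_log two_pos, norm_sub_rev] at this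
  have hstep : ‖V - Atilde d h α Lk t s‖ ≤ (2 - s) + 8 * (2 - s) ^ 2 := by
    have := norm_amplify_sub_le_of_mem_unitary hV ((norm_nonneg _).trans hUV) hε hUV
    rwa [sub_sub_cancel, norm_sub_rev] at this
  intro r
  have hVr : V ^ r = exp (((r : ℂ) * (-(t : ℂ) * Complex.I)) • Hpart d h α L) := by
    rw [← Matrix.exp_nsmul, ← Nat.cast_smul_eq_nsmul ℂ, smul_smul]
  convert norm_pow_sub_pow_le (CStarRing.norm_of_mem_unitary hV).le hstep r using 3
  · rw [hVr]
    congr 2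
    push_cast [t]
    ring
  · ring

/-- **Total simulation error of the amplified generalized truncated Taylor method.**
If `H` is Hermitian, `Λ > 0`, `t_∞ = log 2 / Λ`, `s = s_{\vec L}(t_∞)`, `ε = 2 − s ≤ 1/2`,
then for every number of steps `r`,
`‖exp(−i r t_∞ H) − Ã^r‖ ≤ r (ε + 8ε²) (1 + ε + 8ε²)^{r−1}`. -/
theorem total_simulation_error (d L : ℕ) (hd : 1 ≤ d) (hL : 1 ≤ L)
    (h : ℕ → Matrix (Fin d) (Fin d) ℂ) (α : ℕ → ℝ)
    (hunit : ∀ ℓ < L, h ℓ ∈ Matrix.unitaryGroup (Fin d) ℂ)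
    (hα : ∀ ℓ < L, 0 ≤ α ℓ)
    (Lk : ℕ → ℕ) (hLk : ∀ k, Lk k ≤ L)
    (hH : (Hpart d h α L).IsHermitian)
    (hΛ : 0 < ∑ ℓ ∈ Finset.range L, α ℓ)
    (hε : 2 - strunc α Lk (Real.log 2 / ∑ ℓ ∈ Finset.range L, α ℓ) ≤ 1 / 2) :
    ∀ r : ℕ,
      ‖NormedSpace.exp
          ((-((r : ℝ) * (Real.log 2 / ∑ ℓ ∈ Finset.range L, α ℓ)) * Complex.I) •
            Hpart d h α L) -
        (Atilde d h α Lk (Real.log 2 / ∑ ℓ ∈ Finset.range L, α ℓ)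
            (strunc α Lk (Real.log 2 / ∑ ℓ ∈ Finset.range L, α ℓ))) ^ r‖ ≤
      (r : ℝ) *
        ((2 - strunc α Lk (Real.log 2 / ∑ ℓ ∈ Finset.range L, α ℓ)) +
          8 * (2 - strunc α Lk (Real.log 2 / ∑ ℓ ∈ Finset.range L, α ℓ)) ^ 2) *
        (1 + (2 - strunc α Lk (Real.log 2 / ∑ ℓ ∈ Finset.range L, α ℓ)) +
          8 * (2 - strunc α Lk (Real.log 2 / ∑ ℓ ∈ Finset.range L, α ℓ)) ^ 2) ^ (r - 1) :=
  total_simulation_error_general d L hd h α hunit hα Lk hLk hH hΛ hε
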